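/- Let n ≥ 6 be even. Let P be the group with generators g_{i(i−1)} for i modulo n (so the generators are g_{21}, g_{32}, …, g_{n(n−1)}, g_{1n}) and defining relations g_{n(n−1)} g_{(n−1)(n−2)} g_{(n−2)(n−3)} ⋯ g_{32} g_{21} g_{1n} = 1, g_{n(n−1)} g_{(n−2)(n−3)} ⋯ g_{43} g_{21} = 1, and g_{(n−1)(n−2)} g_{(n−3)(n−4)} ⋯ g_{32} g_{1n} = 1. Then the assignment g_{i(i−1)} ↦ r_i r_{i−1} (indices modulo n) extends to a well-defined group homomorphism P → H_n which is an isomorphism of P onto the subgroup G_n of H_n. -/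

import Mathlib

noncomputable section
open Matrix Complex
namespace HView

abbrev W : Type := Fin 2 → ℂ

def herm (x y : W) : ℂ := x 0 * (starRingEnd ℂ) (y 0) - x 1 * (starRingEnd ℂ) (y 1)

def IsNeg (p : W) : Prop := p ≠ 0 ∧ (herm p p).re < 0
def IsIso (p : W) : Prop := p ≠ 0 ∧ herm p p = 0
def IsNonpos (p : W) : Prop := p ≠ 0 ∧ (herm p p).re ≤ 0

def triArea (p₁ p₂ p₃ : W) : ℝ :=
  2 * Complex.arg (-(herm p₁ p₂ * herm p₂ p₃ * herm p₃ p₁))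

def Jm : Matrix (Fin 2) (Fin 2) ℂ := !![1, 0; 0, -1]

def SU11 : Subgroup (SpecialLinearGroup (Fin 2) ℂ) where
  carrier := {A | (A : Matrix (Fin 2) (Fin 2) ℂ)ᴴ * Jm * (A : Matrix (Fin 2) (Fin 2) ℂ) = Jm}
  one_mem' := by simp
  mul_mem' := by
    intro A B hA hB
    simp only [Set.mem_setOf_eq] at hA hB ⊢
    have hco : ((A * B : SpecialLinearGroup (Fin 2) ℂ) : Matrix (Fin 2) (Fin 2) ℂ)
        = (A : Matrix (Fin 2) (Fin 2) ℂ) * (B : Matrix (Fin 2) (Fin 2) ℂ) := rfl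
    rw [hco, conjTranspose_mul]
    calc (B : Matrix (Fin 2) (Fin 2) ℂ)ᴴ * (A : Matrix (Fin 2) (Fin 2) ℂ)ᴴ * Jm *
          ((A : Matrix (Fin 2) (Fin 2) ℂ) * (B : Matrix (Fin 2) (Fin 2) ℂ))
        = (B : Matrix (Fin 2) (Fin 2) ℂ)ᴴ *
          ((A : Matrix (Fin 2) (Fin 2) ℂ)ᴴ * Jm * (A : Matrix (Fin 2) (Fin 2) ℂ)) *
          (B : Matrix (Fin 2) (Fin 2) ℂ) := by noncomm_ring
      _ = Jm := by rw [hA]; exact hB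
  inv_mem' := by
    intro A hA
    simp only [Set.mem_setOf_eq] at hA ⊢
    have h1 : (A : Matrix (Fin 2) (Fin 2) ℂ) *
        ((A⁻¹ : SpecialLinearGroup (Fin 2) ℂ) : Matrix (Fin 2) (Fin 2) ℂ) = 1 := by
      rw [← Matrix.SpecialLinearGroup.coe_mul, mul_inv_cancel,
        Matrix.SpecialLinearGroup.coe_one]
    have h2 : ((A⁻¹ : SpecialLinearGroup (Fin 2) ℂ) : Matrix (Fin 2) (Fin 2) ℂ)ᴴ *
        (A : Matrix (Fin 2) (Fin 2) ℂ)ᴴ = 1 := by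
      rw [← conjTranspose_mul, h1, conjTranspose_one]
    calc ((A⁻¹ : SpecialLinearGroup (Fin 2) ℂ) : Matrix (Fin 2) (Fin 2) ℂ)ᴴ * Jm *
          ((A⁻¹ : SpecialLinearGroup (Fin 2) ℂ) : Matrix (Fin 2) (Fin 2) ℂ)
        = ((A⁻¹ : SpecialLinearGroup (Fin 2) ℂ) : Matrix (Fin 2) (Fin 2) ℂ)ᴴ *
          ((A : Matrix (Fin 2) (Fin 2) ℂ)ᴴ * Jm * (A : Matrix (Fin 2) (Fin 2) ℂ)) *
          ((A⁻¹ : SpecialLinearGroup (Fin 2) ℂ) : Matrix (Fin 2) (Fin 2) ℂ) := by rw [hA]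
      _ = (((A⁻¹ : SpecialLinearGroup (Fin 2) ℂ) : Matrix (Fin 2) (Fin 2) ℂ)ᴴ *
            (A : Matrix (Fin 2) (Fin 2) ℂ)ᴴ) * Jm *
          ((A : Matrix (Fin 2) (Fin 2) ℂ) *
            ((A⁻¹ : SpecialLinearGroup (Fin 2) ℂ) : Matrix (Fin 2) (Fin 2) ℂ)) := by noncomm_ring
      _ = Jm := by rw [h1, h2, one_mul, mul_one]


instance : Fact (Even (Fintype.card (Fin 2))) := ⟨by decide⟩

def negOne : SU11 := ⟨-1, by
  show ((-1 : SpecialLinearGroup (Fin 2) ℂ) : Matrix (Fin 2) (Fin 2) ℂ)ᴴ * Jm *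
    ((-1 : SpecialLinearGroup (Fin 2) ℂ) : Matrix (Fin 2) (Fin 2) ℂ) = Jm
  simp⟩

lemma negOne_mul_negOne : negOne * negOne = 1 := by
  apply Subtype.ext
  show ((-1 : SpecialLinearGroup (Fin 2) ℂ)) * (-1) = 1
  apply Subtype.ext
  show ((-1 : Matrix (Fin 2) (Fin 2) ℂ)) * (-1) = 1
  simp

lemma negOne_central (g : SU11) : g * negOne = negOne * g := by
  apply Subtype.ext
  apply Subtype.ext
  show ((g : SpecialLinearGroup (Fin 2) ℂ) : Matrix (Fin 2) (Fin 2) ℂ) * (-1)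
      = (-1) * ((g : SpecialLinearGroup (Fin 2) ℂ) : Matrix (Fin 2) (Fin 2) ℂ)
  simp

def pm1 : Subgroup SU11 where
  carrier := {1, negOne}
  one_mem' := Or.inl rfl
  mul_mem' := by
    rintro a b (rfl | ha) (rfl | hb)
    · exact Or.inl (one_mul 1)
    · rw [Set.mem_singleton_iff] at hb; subst hb
      exact Or.inr (by rw [one_mul]; rfl)
    · rw [Set.mem_singleton_iff] at ha; subst ha
      exact Or.inr (by rw [mul_one]; rfl)
    · rw [Set.mem_singleton_iff] at ha hb; subst ha; subst hb
      exact Or.inl negOne_mul_negOne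
  inv_mem' := by
    rintro a (rfl | ha)
    · exact Or.inl inv_one
    · rw [Set.mem_singleton_iff] at ha; subst ha
      refine Or.inr ?_
      rw [Set.mem_singleton_iff, inv_eq_iff_mul_eq_one, negOne_mul_negOne]

instance pm1_normal : pm1.Normal := by
  constructor
  intro x hx g
  rcases hx with rfl | hx
  · simpa using pm1.one_mem
  · rw [Set.mem_singleton_iff] at hx; subst hx
    have h : g * negOne * g⁻¹ = negOne := by
      rw [negOne_central, mul_assoc, mul_inv_cancel, mul_one]
    rw [h]
    exact Or.inr rfl

abbrev PU11 := SU11 ⧸ pm1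

def mobius (A : SU11) (z : ℂ) : ℂ :=
  (((A : SpecialLinearGroup (Fin 2) ℂ) : Matrix (Fin 2) (Fin 2) ℂ) 0 0 * z +
    ((A : SpecialLinearGroup (Fin 2) ℂ) : Matrix (Fin 2) (Fin 2) ℂ) 0 1) /
  (((A : SpecialLinearGroup (Fin 2) ℂ) : Matrix (Fin 2) (Fin 2) ℂ) 1 0 * z +
    ((A : SpecialLinearGroup (Fin 2) ℂ) : Matrix (Fin 2) (Fin 2) ℂ) 1 1)

lemma mobius_mul_negOne (A : SU11) (z : ℂ) : mobius (A * negOne) z = mobius A z := by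
  have hm : (((A * negOne : SU11) : SpecialLinearGroup (Fin 2) ℂ) : Matrix (Fin 2) (Fin 2) ℂ)
      = -(((A : SpecialLinearGroup (Fin 2) ℂ) : Matrix (Fin 2) (Fin 2) ℂ)) := by
    show ((A : SpecialLinearGroup (Fin 2) ℂ) : Matrix (Fin 2) (Fin 2) ℂ) *
      (-1 : Matrix (Fin 2) (Fin 2) ℂ) = _
    simp
  set M := ((A : SpecialLinearGroup (Fin 2) ℂ) : Matrix (Fin 2) (Fin 2) ℂ) with hM
  unfold mobius
  rw [hm]
  simp only [Matrix.neg_apply]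
  rw [show -M 0 0 * z + -M 0 1 = -(M 0 0 * z + M 0 1) by ring,
    show -M 1 0 * z + -M 1 1 = -(M 1 0 * z + M 1 1) by ring, neg_div_neg_eq]

def pact (g : PU11) : ℂ → ℂ :=
  Quotient.liftOn' g (fun A => mobius A) (by
    intro a b hab
    have hab' : a⁻¹ * b ∈ pm1 := QuotientGroup.leftRel_apply.mp hab
    have key : b = a ∨ b = a * negOne := by
      rcases hab' with h | h
      · left
        have : a⁻¹ * b = 1 := h
        rw [inv_mul_eq_one] at this
        exact this.symm
      · right
        rw [Set.mem_singleton_iff] at h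
        rw [inv_mul_eq_iff_eq_mul] at h
        exact h
    funext z
    rcases key with rfl | rfl
    · rfl
    · exact (mobius_mul_negOne a z).symm)

lemma pact_mk (A : SU11) (z : ℂ) : pact (QuotientGroup.mk A : PU11) z = mobius A z := rfl


instance : TopologicalSpace (SpecialLinearGroup (Fin 2) ℂ) :=
  instTopologicalSpaceSubtype

def IsHyperbolic (g : PU11) : Prop :=
  ∃ A : SU11, (QuotientGroup.mk A : PU11) = g ∧
    (Matrix.trace ((A : SpecialLinearGroup (Fin 2) ℂ) : Matrix (Fin 2) (Fin 2) ℂ)).im = 0 ∧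
    2 < |(Matrix.trace ((A : SpecialLinearGroup (Fin 2) ℂ) : Matrix (Fin 2) (Fin 2) ℂ)).re|

def IsAttractor (g : PU11) (z : ℂ) : Prop :=
  ‖z‖ = 1 ∧ ∃ A : SU11, (QuotientGroup.mk A : PU11) = g ∧
    ∃ lam : ℂ, 1 < ‖lam‖ ∧
      ((A : SpecialLinearGroup (Fin 2) ℂ) : Matrix (Fin 2) (Fin 2) ℂ).mulVec ![z, 1]
        = lam • ![z, 1]

def IsRepeller (g : PU11) (z : ℂ) : Prop :=
  ‖z‖ = 1 ∧ ∃ A : SU11, (QuotientGroup.mk A : PU11) = g ∧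
    ∃ lam : ℂ, ‖lam‖ < 1 ∧
      ((A : SpecialLinearGroup (Fin 2) ℂ) : Matrix (Fin 2) (Fin 2) ℂ).mulVec ![z, 1]
        = lam • ![z, 1]

def IsPositiveCycle (l : List ℂ) : Prop :=
  3 ≤ l.length ∧ ∃ t : Fin l.length → ℝ,
    StrictMono t ∧ (∀ j k : Fin l.length, t j - t k < 2 * Real.pi) ∧
    ∀ j : Fin l.length, l.get j = Complex.exp (Complex.I * (t j : ℂ))

def IsNegativeCycle (l : List ℂ) : Prop :=
  3 ≤ l.length ∧ ∃ t : Fin l.length → ℝ,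
    StrictAnti t ∧ (∀ j k : Fin l.length, t j - t k < 2 * Real.pi) ∧
    ∀ j : Fin l.length, l.get j = Complex.exp (Complex.I * (t j : ℂ))

def longRel (n : ℕ) : FreeGroup (ZMod n) :=
  (((List.range n).map (fun k => FreeGroup.of ((k + 1 : ℕ) : ZMod n))).reverse).prod

def Hrels (n : ℕ) : Set (FreeGroup (ZMod n)) :=
  {x | ∃ i : ZMod n, x = FreeGroup.of i * FreeGroup.of i} ∪ {longRel n}

abbrev H (n : ℕ) := PresentedGroup (Hrels n)

def r (n : ℕ) (i : ZMod n) : H n := PresentedGroup.of i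

def pts {n : ℕ} (A : ZMod n → SU11) (p : W) : ℕ → W
  | 0 => p
  | (k+1) => (((A ((k + 1 : ℕ) : ZMod n) : SpecialLinearGroup (Fin 2) ℂ)
      : Matrix (Fin 2) (Fin 2) ℂ)).mulVec (pts A p k)

def IsLift {n : ℕ} (ρ : H n →* PU11) (A : ZMod n → SU11) : Prop :=
  (∀ i : ZMod n, (QuotientGroup.mk (A i) : PU11) = ρ (r n i)) ∧
  ((((List.range n).map (fun k => A ((k + 1 : ℕ) : ZMod n))).reverse).prod = 1 ∨
   (((List.range n).map (fun k => A ((k + 1 : ℕ) : ZMod n))).reverse).prod = negOne)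

def areaRep (n : ℕ) (A : ZMod n → SU11) (c p : W) : ℝ :=
  ∑ i ∈ Finset.range n, triArea c (pts A p (i + 1)) (pts A p (i + 2))

def HasArea {n : ℕ} (ρ : H n →* PU11) (a : ℝ) : Prop :=
  ∀ A : ZMod n → SU11, IsLift ρ A → ∀ c p : W, IsNeg c → IsNeg p → areaRep n A c p = a

def orbitSeq {n : ℕ} (ρ : H n →* PU11) (j : ZMod n) (z : ℂ) : ℕ → ℂ
  | 0 => z
  | (k+1) => pact (ρ (r n (j + (k : ℕ)))) (orbitSeq ρ j z k)

def iCycle {n : ℕ} (ρ : H n →* PU11) (i : ZMod n) (b e : ℂ) : List ℂ :=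
  ((List.range (n - 2)).map (fun k => [orbitSeq ρ (i + 1) b k, orbitSeq ρ (i + 1) e k])).flatten

def IsReflection (g : PU11) (q : W) : Prop :=
  ∃ A : SU11, (QuotientGroup.mk A : PU11) = g ∧
    ∀ x : W, ((A : SpecialLinearGroup (Fin 2) ℂ) : Matrix (Fin 2) (Fin 2) ℂ).mulVec x
      = Complex.I • (x - (2 * herm x q / herm q q) • q)

def Gsub (n : ℕ) : Subgroup (H n) :=
  Subgroup.closure {x : H n | ∃ i j : ZMod n, x = r n i * r n j}

lemma rr_mem (n : ℕ) (i j : ZMod n) : r n i * r n j ∈ Gsub n :=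
  Subgroup.subset_closure ⟨i, j, rfl⟩

lemma rrrr_mem (n : ℕ) (i j k l : ZMod n) :
    r n i * r n j * r n k * r n l ∈ Gsub n := by
  have h : r n i * r n j * r n k * r n l = (r n i * r n j) * (r n k * r n l) := by
    rw [mul_assoc]
  rw [h]
  exact mul_mem (rr_mem n i j) (rr_mem n k l)

def v (n : ℕ) (k : ℕ) : H n :=
  (((List.range (k % n)).map (fun m => r n ((m + 1 : ℕ) : ZMod n))).reverse).prod

def w0 (n : ℕ) (i : ℕ) : H n := if Even i then v n i else v n i * r n 0

def w (n : ℕ) (j : ℕ) : H n :=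
  if j % (2 * n - 2) ≤ n - 2 then w0 n (j % (2 * n - 2))
  else r n 0 * w0 n (j % (2 * n - 2) - (n - 1)) * r n 0

def IsLiftGW {n : ℕ} (ρ : ↥(Gsub n) →* PU11) (u : ℕ → H n) (B : ℕ → SU11) : Prop :=
  ∀ (j : ℕ) (h : u j ∈ Gsub n), (QuotientGroup.mk (B j) : PU11) = ρ ⟨u j, h⟩

def areaG (n : ℕ) (B : ℕ → SU11) (c p q : W) : ℝ :=
  ∑ j ∈ Finset.range (2 * n - 2),
    triArea c
      (((B j : SpecialLinearGroup (Fin 2) ℂ) : Matrix (Fin 2) (Fin 2) ℂ).mulVec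
        (if Even j then p else q))
      (((B ((j + 1) % (2 * n - 2)) : SpecialLinearGroup (Fin 2) ℂ)
          : Matrix (Fin 2) (Fin 2) ℂ).mulVec
        (if Even ((j + 1) % (2 * n - 2)) then p else q))

def HasAreaG {n : ℕ} (ρ : ↥(Gsub n) →* PU11) (a : ℝ) : Prop :=
  ∀ B : ℕ → SU11, IsLiftGW ρ (w n) B →
    ∀ c p q : W, IsNeg c → IsNeg p → IsNeg q → areaG n B c p q = a

def bigCycle (n : ℕ) (s t s' t' : ZMod n → ℂ) (wd : ℕ → ℂ) : List ℂ :=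
  [t 1, s 2, wd 2] ++
  ((List.range (n - 4)).map
    (fun k => [s ((k + 3 : ℕ) : ZMod n), t ((k + 3 : ℕ) : ZMod n), wd (k + 3)])).flatten ++
  [t ((n - 1 : ℕ) : ZMod n), s ((n : ℕ) : ZMod n)] ++
  [s' 2, wd (n + 1)] ++
  ((List.range (n - 4)).map
    (fun k => [s' ((k + 3 : ℕ) : ZMod n), t' ((k + 3 : ℕ) : ZMod n), wd (n + k + 2)])).flatten ++
  [t' ((n - 1 : ℕ) : ZMod n)]

def IsSE {n : ℕ} (ρ ρ' : H n →* PU11) (i : ZMod n) (t : ℝ) : Prop :=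
  IsHyperbolic (ρ (r n i * r n (i - 1))) ∧
  ∃ φ : ℝ → PU11, Continuous φ ∧ (∀ s u : ℝ, φ (s + u) = φ s * φ u) ∧
    IsHyperbolic (φ 1) ∧ φ 1 * φ 1 = ρ (r n i * r n (i - 1)) ∧
    (∀ j : ZMod n, j ≠ i - 1 → j ≠ i → ρ' (r n j) = ρ (r n j)) ∧
    ρ' (r n (i - 1)) = φ t * ρ (r n (i - 1)) * (φ t)⁻¹ ∧
    ρ' (r n i) = φ t * ρ (r n i) * (φ t)⁻¹

def ConjRep {n : ℕ} (ρ ρ' : H n →* PU11) : Prop :=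
  ∃ g : PU11, ∀ h : H n, ρ' h = g * ρ h * g⁻¹

def NormalizedAt {n : ℕ} (ρ : H n →* PU11) (i : ZMod n) : Prop :=
  IsRepeller (ρ (r n i * r n (i - 1))) (-1) ∧
  IsAttractor (ρ (r n i * r n (i - 1))) 1 ∧
  pact (ρ (r n i)) 0 = 0

def PPlus {n : ℕ} (ρ : H n →* PU11) : Prop :=
  Function.Injective ρ ∧ DiscreteTopology (MonoidHom.range ρ) ∧
  HasArea ρ (((n : ℝ) - 4) * Real.pi)

def tupleAt {n : ℕ} (ρ : H n →* PU11) (i : ZMod n) : List ℂ :=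
  (iCycle ρ i (-1) 1).drop 2

def KPlusL (n : ℕ) (l : List ℂ) : Prop :=
  l.length = 2 * n - 6 ∧ (∀ z ∈ l, ‖z‖ = 1 ∧ 0 < z.im) ∧ IsPositiveCycle l

def PrelsList (n : ℕ) : Set (FreeGroup (ZMod n)) :=
  { ((List.range n).map (fun k => FreeGroup.of ((n - k : ℕ) : ZMod n))).prod,
    ((List.range (n / 2)).map (fun k => FreeGroup.of ((n - 2 * k : ℕ) : ZMod n))).prod,
    ((List.range (n / 2)).map (fun k => FreeGroup.of ((n - 1 - 2 * k : ℕ) : ZMod n))).prod }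

abbrev Pgrp (n : ℕ) := PresentedGroup (PrelsList n)

def gp (n : ℕ) (i : ZMod n) : Pgrp n := PresentedGroup.of i

/-! The relations of `P` are consequences of `r_i² = 1` and `r_n ⋯ r_1 = 1`, which gives `φ`.
Conversely, `H_n` acts on two copies `P × Bool` of `P` (Schreier's construction for the
index-two subgroup `G_n`): `r_i` swaps the copies, by `p ↦ A_i⁻¹ p` one way and `p ↦ A_i p`
the other, where `A_i = g_i g_{i-1} ⋯ g_1`. The first relation says that `A_0 = 1 = g_0 A_{n-1}`,
so `A` is consistent modulo `n` and `r_i r_{i-1}` acts on the first copy as left multiplication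
by `g_i`. Hence `r_n ⋯ r_1 = (r_n r_{n-1}) ⋯ (r_2 r_1)` acts there as `g_n g_{n-2} ⋯ g_2 = 1`,
and, after conjugation by `r_0`, on the second copy as `g_{n-1} ⋯ g_1 = 1`. Since `φ y` moves
`(1, false)` to `(y, false)`, `φ` is injective. Its image is `G_n` because
`r_i r_j = (r_i r_0)(r_j r_0)⁻¹` and `r_i r_0` telescopes to `φ (A_i)`. -/

section ProductIdentities

variable {G R : Type*} [Ring R]

theorem prod_range_telescope [Monoid G] (a : R → G) (ha : ∀ i, a i * a i = 1) (c : R)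
    (m : ℕ) :
    ((List.range m).map fun k : ℕ => a (c - k) * a (c - k - 1)).prod = a c * a (c - m) := by
  induction m with
  | zero => simp [ha]
  | succ m ih =>
    rw [List.prod_range_succ, ih, mul_assoc, ← mul_assoc (a (c - m)), ha, one_mul,
      Nat.cast_succ, sub_add_eq_sub_sub]

theorem prod_range_two_mul [Monoid G] (x : R → G) (c : R) (m : ℕ) :
    ((List.range (2 * m)).map fun k : ℕ => x (c - k)).prod =
      ((List.range m).map fun k : ℕ => x (c - 2 * k) * x (c - 2 * k - 1)).prod := by
  induction m with
  | zero => simp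
  | succ m ih =>
    rw [show 2 * (m + 1) = 2 * m + 1 + 1 by ring, List.prod_range_succ, List.prod_range_succ, ih,
      List.prod_range_succ, mul_assoc]
    push_cast
    rw [sub_add_eq_sub_sub]

theorem prod_range_sub_one_sub_eq_conj [Group G] {n : ℕ} [NeZero n] (x : ZMod n → G)
    (c : ZMod n) :
    ((List.range n).map fun k : ℕ => x (c - 1 - k)).prod =
      (x c)⁻¹ * ((List.range n).map fun k : ℕ => x (c - k)).prod * x c := by
  obtain ⟨m, rfl⟩ : ∃ m, n = m + 1 := Nat.exists_eq_succ_of_ne_zero (NeZero.ne n)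
  have hwrap : c - 1 - m = c := by
    have h := ZMod.natCast_self (m + 1)
    push_cast at h
    linear_combination -h
  rw [List.prod_range_succ, List.prod_range_succ', hwrap]
  simp [sub_sub, add_comm]

end ProductIdentities

section PartialProd

variable {G : Type*} [Group G] {n : ℕ}

def partialProd (x : ZMod n → G) (i : ZMod n) : G :=
  ((List.range i.val).map fun k : ℕ => x (i - k)).prod

@[simp]
theorem partialProd_zero (x : ZMod n → G) : partialProd x 0 = 1 := by
  simp [partialProd]

theorem map_partialProd {G' : Type*} [Group G'] (f : G →* G') (x : ZMod n → G) (i : ZMod n) :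
    f (partialProd x i) = partialProd (f ∘ x) i := by
  simp [partialProd, map_list_prod, List.map_map, Function.comp_def]

theorem partialProd_eq_mul_partialProd_sub_one [NeZero n] (x : ZMod n → G)
    (hx : ((List.range n).map fun k : ℕ => x (-k)).prod = 1) (i : ZMod n) :
    partialProd x i = x i * partialProd x (i - 1) := by
  by_cases hi : i = 0
  · obtain ⟨m, rfl⟩ : ∃ m, n = m + 1 := Nat.exists_eq_succ_of_ne_zero (NeZero.ne n)
    rw [List.prod_range_succ'] at hx
    simp only [partialProd, hi, zero_sub, ZMod.val_neg_one, ZMod.val_zero, List.range_zero,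
      List.map_nil, List.prod_nil]
    simpa [sub_eq_add_neg, add_comm] using hx.symm
  · obtain ⟨j, hj⟩ : ∃ j, i.val = j + 1 :=
      Nat.exists_eq_succ_of_ne_zero (by rwa [Ne, ZMod.val_eq_zero])
    have hpred : (i - 1).val = j := by
      have hi' : i - 1 = (j : ZMod n) := by
        rw [← ZMod.natCast_zmod_val i, hj]
        push_cast
        ring
      rw [hi', ZMod.val_natCast_of_lt (by have := ZMod.val_lt i; omega)]
    simp only [partialProd, hj, hpred, List.prod_range_succ', Nat.cast_zero, sub_zero]
    simp [sub_sub, add_comm]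

end PartialProd

section FlipMul

variable {P : Type*} [Group P]

def flipMul (a : P) : Equiv.Perm (P × Bool) :=
  Function.Involutive.toPerm (fun x => (cond x.2 a a⁻¹ * x.1, !x.2))
    (by rintro ⟨p, _ | _⟩ <;> simp)

@[simp]
theorem flipMul_apply_false (a p : P) : flipMul a (p, false) = (a⁻¹ * p, true) := rfl

@[simp]
theorem flipMul_apply_true (a p : P) : flipMul a (p, true) = (a * p, false) := rfl

theorem flipMul_mul_self (a : P) : flipMul a * flipMul a = 1 :=
  Equiv.ext (Function.Involutive.toPerm_involutive _)

theorem flipMul_mul_flipMul_apply_false (a b p : P) :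
    (flipMul a * flipMul b) (p, false) = (a * b⁻¹ * p, false) := by
  simp [mul_assoc]

theorem list_prod_apply_false {ι : Type*} (l : List ι) (τ : ι → Equiv.Perm (P × Bool))
    (c : ι → P) (hτ : ∀ i p, τ i (p, false) = (c i * p, false)) (p : P) :
    (l.map τ).prod (p, false) = ((l.map c).prod * p, false) := by
  induction l with
  | nil => simp
  | cons i l ih => simp [Equiv.Perm.mul_apply, ih, hτ, mul_assoc]

theorem eq_one_of_apply_false_of_conj_flipMul (a : P) (X : Equiv.Perm (P × Bool))
    (hX : ∀ p, X (p, false) = (p, false))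
    (hconj : ∀ p, ((flipMul a)⁻¹ * X * flipMul a) (p, false) = (p, false)) : X = 1 := by
  ext1 ⟨p, _ | _⟩
  · exact hX p
  · have h := hconj (a * p)
    rw [Equiv.Perm.mul_apply, Equiv.Perm.mul_apply, flipMul_apply_false, inv_mul_cancel_left,
      Equiv.Perm.inv_eq_iff_eq, flipMul_apply_false, inv_mul_cancel_left] at h
    exact h

theorem apply_false_eq_mul_of_forall_of {α : Type*} {rels : Set (FreeGroup α)}
    (ψ : PresentedGroup rels →* Equiv.Perm (PresentedGroup rels × Bool))
    (hψ : ∀ a p, ψ (.of a) (p, false) = (.of a * p, false)) (y p : PresentedGroup rels) :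
    ψ y (p, false) = (y * p, false) := by
  have hy : y ∈ Subgroup.closure (Set.range PresentedGroup.of) := by
    rw [PresentedGroup.closure_range_of]
    exact Subgroup.mem_top y
  induction hy using Subgroup.closure_induction generalizing p with
  | mem _ h => obtain ⟨a, rfl⟩ := h; exact hψ a p
  | one => simp
  | mul a b _ _ ha hb => rw [map_mul, Equiv.Perm.mul_apply, hb, ha, mul_assoc]
  | inv a _ ha => rw [map_inv, Equiv.Perm.inv_eq_iff_eq, ha, mul_inv_cancel_left]

end FlipMul

section Relations

variable {G : Type*} [Group G] {n : ℕ}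

theorem natCast_sub_eq_neg {k : ℕ} (h : k ≤ n) : ((n - k : ℕ) : ZMod n) = -k := by
  rw [Nat.cast_sub h, ZMod.natCast_self, zero_sub]

theorem lift_of_eq_one_of_mem {α : Type*} {rels : Set (FreeGroup α)} {w : FreeGroup α}
    (hw : w ∈ rels) : FreeGroup.lift (PresentedGroup.of (rels := rels)) w = 1 := by
  rw [← FreeGroup.lift_unique (f := PresentedGroup.of) (PresentedGroup.mk rels) fun _ => rfl]
  exact PresentedGroup.one_of_mem hw

theorem lift_longRel (x : ZMod n → G) :
    FreeGroup.lift x (longRel n) = ((List.range n).map fun k : ℕ => x (-k)).prod := by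
  rw [longRel, map_list_prod, ← List.map_reverse, List.range_eq_range', List.reverse_range',
    ← List.range_eq_range', List.map_map, List.map_map]
  congr 1
  refine List.map_congr_left fun k hk => ?_
  rw [List.mem_range] at hk
  simp only [Function.comp_apply, FreeGroup.lift_apply_of]
  rw [show 0 + n - 1 - k + 1 = n - k by omega, natCast_sub_eq_neg hk.le]

theorem forall_mem_hrels_lift_eq_one_iff (x : ZMod n → G) :
    (∀ w ∈ Hrels n, FreeGroup.lift x w = 1) ↔
      (∀ i, x i * x i = 1) ∧ ((List.range n).map fun k : ℕ => x (-k)).prod = 1 := by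
  simp [Hrels, lift_longRel, and_comm]

theorem r_mul_self (i : ZMod n) : r n i * r n i = 1 :=
  ((forall_mem_hrels_lift_eq_one_iff (r n)).1 fun _ => lift_of_eq_one_of_mem).1 i

theorem r_inv (i : ZMod n) : (r n i)⁻¹ = r n i :=
  inv_eq_of_mul_eq_one_right (r_mul_self i)

theorem prod_range_r_neg : ((List.range n).map fun k : ℕ => r n (-k)).prod = 1 :=
  ((forall_mem_hrels_lift_eq_one_iff (r n)).1 fun _ => lift_of_eq_one_of_mem).2

theorem lift_prod_range_of (x : ZMod n → G) (m : ℕ) (f : ℕ → ℕ) (g : ℕ → ZMod n)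
    (hfg : ∀ k < m, (f k : ZMod n) = g k) :
    FreeGroup.lift x ((List.range m).map fun k => FreeGroup.of (f k : ZMod n)).prod =
      ((List.range m).map fun k => x (g k)).prod := by
  rw [map_list_prod, List.map_map]
  congr 1
  refine List.map_congr_left fun k hk => ?_
  rw [Function.comp_apply, FreeGroup.lift_apply_of, hfg k (List.mem_range.1 hk)]

theorem forall_mem_prelsList_lift_eq_one_iff (x : ZMod n → G) :
    (∀ w ∈ PrelsList n, FreeGroup.lift x w = 1) ↔
      ((List.range n).map fun k : ℕ => x (-k)).prod = 1 ∧
      ((List.range (n / 2)).map fun k : ℕ => x (-(2 * k))).prod = 1 ∧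
      ((List.range (n / 2)).map fun k : ℕ => x (-1 - 2 * k)).prod = 1 := by
  simp only [PrelsList, Set.forall_mem_insert, Set.mem_singleton_iff, forall_eq]
  rw [lift_prod_range_of x n _ _ fun k hk => natCast_sub_eq_neg hk.le,
    lift_prod_range_of x (n / 2) _ (fun k : ℕ => -(2 * k : ZMod n)) fun k hk => by
      rw [natCast_sub_eq_neg (by omega), Nat.cast_mul, Nat.cast_ofNat],
    lift_prod_range_of x (n / 2) _ (fun k : ℕ => -1 - 2 * k) fun k hk => by
      rw [Nat.sub_sub, natCast_sub_eq_neg (by omega)]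
      push_cast
      ring]

theorem gp_relations :
    ((List.range n).map fun k : ℕ => gp n (-k)).prod = 1 ∧
      ((List.range (n / 2)).map fun k : ℕ => gp n (-(2 * k))).prod = 1 ∧
      ((List.range (n / 2)).map fun k : ℕ => gp n (-1 - 2 * k)).prod = 1 :=
  (forall_mem_prelsList_lift_eq_one_iff (gp n)).1 fun _ => lift_of_eq_one_of_mem

end Relations

section Presentation

variable {n : ℕ}

theorem exists_hom_gp [NeZero n] (heven : Even n) :
    ∃ φ : Pgrp n →* H n, ∀ i : ZMod n, φ (gp n i) = r n i * r n (i - 1) := by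
  have h₁ := prod_range_telescope (r n) r_mul_self 0 n
  have h₂ := prod_range_two_mul (r n) 0 (n / 2)
  have h₃ := prod_range_two_mul (r n) (-1) (n / 2)
  have hrot := prod_range_sub_one_sub_eq_conj (r n) 0
  rw [Nat.two_mul_div_two_of_even heven] at h₂ h₃
  simp only [zero_sub, ZMod.natCast_self, neg_zero, r_mul_self, prod_range_r_neg] at h₁ h₂ hrot
  rw [hrot, mul_one, inv_mul_cancel] at h₃
  exact ⟨PresentedGroup.toGroup
    ((forall_mem_prelsList_lift_eq_one_iff _).2 ⟨h₁, h₂.symm, h₃.symm⟩),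
    fun i => PresentedGroup.toGroup.of _⟩

section CosetAction

variable {P : Type*} [Group P] [NeZero n] (x : ZMod n → P)

theorem flipMul_partialProd_mul_apply_false
    (hx : ((List.range n).map fun k : ℕ => x (-k)).prod = 1) (i : ZMod n) (p : P) :
    (flipMul (partialProd x i) * flipMul (partialProd x (i - 1))) (p, false) =
      (x i * p, false) := by
  rw [flipMul_mul_flipMul_apply_false, partialProd_eq_mul_partialProd_sub_one x hx i,
    mul_inv_cancel_right]

theorem exists_hom_perm_flipMul (heven : Even n)
    (h₁ : ((List.range n).map fun k : ℕ => x (-k)).prod = 1)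
    (h₂ : ((List.range (n / 2)).map fun k : ℕ => x (-(2 * k))).prod = 1)
    (h₃ : ((List.range (n / 2)).map fun k : ℕ => x (-1 - 2 * k)).prod = 1) :
    ∃ ρ : H n →* Equiv.Perm (P × Bool), ∀ i, ρ (r n i) = flipMul (partialProd x i) := by
  set σ : ZMod n → Equiv.Perm (P × Bool) := fun i => flipMul (partialProd x i)
  have hpair (c : ZMod n) (p : P) : ((List.range n).map fun k : ℕ => σ (c - k)).prod (p, false) =
      (((List.range (n / 2)).map fun k : ℕ => x (c - 2 * k)).prod * p, false) := by
    have hsplit := prod_range_two_mul σ c (n / 2)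
    rw [Nat.two_mul_div_two_of_even heven] at hsplit
    rw [hsplit]
    exact list_prod_apply_false _ _ _
      (fun k : ℕ => flipMul_partialProd_mul_apply_false x h₁ (c - 2 * k)) p
  have hlong : ((List.range n).map fun k : ℕ => σ (-k)).prod = 1 := by
    refine eq_one_of_apply_false_of_conj_flipMul (partialProd x 0) _ (fun p => ?_) (fun p => ?_)
    · simpa [h₂] using hpair 0 p
    · have hrot := prod_range_sub_one_sub_eq_conj σ 0
      simp only [zero_sub] at hrot
      change ((σ 0)⁻¹ * _ * σ 0) (p, false) = (p, false)
      rw [← hrot]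
      simpa [h₃] using hpair (-1) p
  exact ⟨PresentedGroup.toGroup ((forall_mem_hrels_lift_eq_one_iff σ).2
    ⟨fun i => flipMul_mul_self _, hlong⟩), fun i => PresentedGroup.toGroup.of _⟩

end CosetAction

section Embedding

variable [NeZero n] (φ : Pgrp n →* H n) (hφ : ∀ i : ZMod n, φ (gp n i) = r n i * r n (i - 1))
include hφ

theorem injective_of_map_gp (heven : Even n) : Function.Injective φ := by
  obtain ⟨h₁, h₂, h₃⟩ := gp_relations (n := n)
  obtain ⟨ρ, hρ⟩ := exists_hom_perm_flipMul (gp n) heven h₁ h₂ h₃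
  have hρφ := apply_false_eq_mul_of_forall_of (ρ.comp φ) fun i p => by
    rw [MonoidHom.comp_apply, ← gp, hφ, map_mul, hρ, hρ]
    exact flipMul_partialProd_mul_apply_false (gp n) h₁ i p
  refine Function.LeftInverse.injective (g := fun h => (ρ h (1, false)).1) fun y => ?_
  simpa using congrArg Prod.fst (hρφ y 1)

theorem r_mul_r_zero_eq_map_partialProd (i : ZMod n) :
    r n i * r n 0 = φ (partialProd (gp n) i) := by
  rw [map_partialProd, show φ ∘ gp n = fun i => r n i * r n (i - 1) from funext hφ, partialProd,
    prod_range_telescope (r n) r_mul_self, ZMod.natCast_zmod_val, sub_self]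

theorem range_eq_gsub : φ.range = Gsub n := by
  refine le_antisymm ?_ ((Subgroup.closure_le _).2 ?_)
  · rintro _ ⟨y, rfl⟩
    refine PresentedGroup.generated_by _ ((Gsub n).comap φ) (fun i => ?_) y
    rw [Subgroup.mem_comap, ← gp, hφ]
    exact rr_mem n i (i - 1)
  · rintro _ ⟨i, j, rfl⟩
    have hij : r n i * r n j = (r n i * r n 0) * (r n j * r n 0)⁻¹ := by
      rw [_root_.mul_inv_rev, r_inv, r_inv, mul_assoc, ← mul_assoc (r n 0), r_mul_self, one_mul]
    rw [hij, r_mul_r_zero_eq_map_partialProd φ hφ, r_mul_r_zero_eq_map_partialProd φ hφ]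
    exact mul_mem ⟨_, rfl⟩ (inv_mem ⟨_, rfl⟩)

end Embedding

end Presentation

/-- the presented group `P` on the generators `g_{i(i-1)}` maps onto
`G_n ≤ H_n` by `g_{i(i-1)} ↦ r_i r_{i-1}`, isomorphically. -/
theorem surface_group_presentation (n : ℕ) (hn : 6 ≤ n) (heven : Even n) :
    (∃ φ : Pgrp n →* H n, ∀ i : ZMod n, φ (gp n i) = r n i * r n (i - 1)) ∧
    (∀ φ : Pgrp n →* H n, (∀ i : ZMod n, φ (gp n i) = r n i * r n (i - 1)) →
      Function.Injective φ ∧ MonoidHom.range φ = Gsub n) := by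
  have : NeZero n := ⟨by omega⟩
  exact ⟨exists_hom_gp heven,
    fun φ hφ => ⟨injective_of_map_gp φ hφ heven, range_eq_gsub φ hφ⟩⟩

end HView
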